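/- Let n ≥ 3 and 2 ≤ p ≤ n-1 be integers, let Σ be a connected topological space, and let κ : Σ → ℝ^{n-1} be a continuous map. Suppose that σ_p(κ(x)) > 0 for every x ∈ Σ, and that there exists a point x₀ ∈ Σ at which all n-1 components of κ(x₀) are positive. Then for every x ∈ Σ and every index i with 1 ≤ i ≤ n-1, one has σ_{p-2;i}(κ(x)) > 0. -/

import Mathlib

/-!
For a set `s` of coordinates and `j + #sᶜ ≤ p`, the conditions `σ_j(κ(x)|_s) > 0` are finitely
many continuous strict inequalities, so the set of `x` satisfying all of them is open; it contains
`x₀`. It is also closed: at a limit point the inequalities hold weakly, and together with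
`σ_p > 0` this forces them to hold strictly, by induction on `#sᶜ` and then on `p - j`. The two
inductive steps are Newton's inequality in its degenerate case `σ_{j+1} = 0` and the double
counting `∑_{i ∈ s} σ_j(κ|_{s∖i}) = (#s - j) σ_j(κ|_s)`. Connectedness finishes the proof, and
`σ_{p-2;i}` is the case `s = {i}ᶜ`.
-/

/-- The `j`-th elementary symmetric polynomial of `κ = (κ_1, …, κ_m) ∈ ℝ^m`,
with the conventions `σ_0 = 1` and `σ_j = 0` for `j > m`. -/
noncomputable def esymm (m j : ℕ) (κ : Fin m → ℝ) : ℝ :=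
  ∑ s ∈ Finset.powersetCard j (Finset.univ : Finset (Fin m)), ∏ i ∈ s, κ i

/-- `σ_{k;i}(κ)`: the `k`-th elementary symmetric polynomial of the `m - 1` numbers
`κ_1, …, κ_{i-1}, κ_{i+1}, …, κ_m`. -/
noncomputable def esymmWithout (m k : ℕ) (i : Fin m) (κ : Fin m → ℝ) : ℝ :=
  ∑ s ∈ Finset.powersetCard k ((Finset.univ : Finset (Fin m)).erase i), ∏ j ∈ s, κ j

/-- The Gårding cone `Γ_k^+ = {κ ∈ ℝ^m : σ_j(κ) > 0 for j = 1, …, k}`. -/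
def gardingCone (m k : ℕ) : Set (Fin m → ℝ) :=
  {κ | ∀ j, 1 ≤ j → j ≤ k → 0 < esymm m j κ}

open Finset

section EsymmOn

variable {ι R : Type*}

def esymmOn [CommSemiring R] (s : Finset ι) (j : ℕ) (κ : ι → R) : R :=
  ∑ t ∈ s.powersetCard j, ∏ i ∈ t, κ i

section CommSemiring

variable [CommSemiring R] (κ : ι → R)

@[simp]
lemma esymmOn_zero (s : Finset ι) : esymmOn s 0 κ = 1 := by
  simp [esymmOn]

lemma esymmOn_of_card_lt {s : Finset ι} {j : ℕ} (h : #s < j) : esymmOn s j κ = 0 := by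
  rw [esymmOn, powersetCard_eq_empty.2 h, sum_empty]

lemma esymmOn_card (s : Finset ι) : esymmOn s #s κ = ∏ i ∈ s, κ i := by
  rw [esymmOn, powersetCard_self, sum_singleton]

lemma esymmOn_one (s : Finset ι) : esymmOn s 1 κ = ∑ i ∈ s, κ i := by
  simp [esymmOn, powersetCard_one]

lemma esymm_eq_esymmOn (m j : ℕ) (κ : Fin m → ℝ) : esymm m j κ = esymmOn univ j κ := rfl

lemma esymmWithout_eq_esymmOn (m k : ℕ) (i : Fin m) (κ : Fin m → ℝ) :
    esymmWithout m k i κ = esymmOn (univ.erase i) k κ := rfl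

lemma esymmOn_eq_multiset_esymm (s : Finset ι) (j : ℕ) :
    esymmOn s j κ = (s.val.map κ).esymm j :=
  (Finset.esymm_map_val κ s j).symm

lemma Multiset.esymm_cons_succ (a : R) (m : Multiset R) (j : ℕ) :
    (a ::ₘ m).esymm (j + 1) = m.esymm (j + 1) + a * m.esymm j := by
  simp [Multiset.esymm, Multiset.map_map, Multiset.sum_map_mul_left]

variable [DecidableEq ι]

lemma esymmOn_insert {a : ι} {s : Finset ι} (ha : a ∉ s) (j : ℕ) :
    esymmOn (insert a s) (j + 1) κ = esymmOn s (j + 1) κ + κ a * esymmOn s j κ := by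
  simp only [esymmOn_eq_multiset_esymm, insert_val_of_notMem ha, Multiset.map_cons,
    Multiset.esymm_cons_succ]

lemma esymmOn_succ_eq_erase {i : ι} {s : Finset ι} (hi : i ∈ s) (j : ℕ) :
    esymmOn s (j + 1) κ = esymmOn (s.erase i) (j + 1) κ + κ i * esymmOn (s.erase i) j κ := by
  conv_lhs => rw [← insert_erase hi]
  exact esymmOn_insert κ (notMem_erase i s) j

end CommSemiring

theorem Continuous.esymmOn {X : Type*} [TopologicalSpace X] [CommSemiring R] [TopologicalSpace R]
    [IsTopologicalSemiring R] {κ : X → ι → R} (hκ : Continuous κ) (s : Finset ι) (j : ℕ) :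
    Continuous fun x => esymmOn s j (κ x) :=
  continuous_finsetSum _ fun t _ => continuous_finsetProd t fun i _ => (continuous_apply i).comp hκ

section CommRing

variable [CommRing R] (κ : ι → R)

lemma esymmOn_one_sq (s : Finset ι) :
    esymmOn s 1 κ ^ 2 = ∑ i ∈ s, κ i ^ 2 + 2 * esymmOn s 2 κ := by
  classical
  induction s using Finset.induction_on with
  | empty => simp [esymmOn_one, esymmOn_of_card_lt κ (show #(∅ : Finset ι) < 2 by simp)]
  | insert a s ha ih =>
    rw [esymmOn_insert κ ha 1, esymmOn_one, esymmOn_one, sum_insert ha, sum_insert ha,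
      ← esymmOn_one]
    linear_combination ih

variable [DecidableEq ι]

/-- Each `j`-subset of `s` lies in `s.erase i` for exactly `#s - j` indices `i`. -/
lemma sum_esymmOn_erase (s : Finset ι) (j : ℕ) :
    ∑ i ∈ s, esymmOn (s.erase i) j κ + j * esymmOn s j κ = #s * esymmOn s j κ := by
  induction s using Finset.induction_on generalizing j with
  | empty =>
    cases j with
    | zero => simp
    | succ j => simp [esymmOn_of_card_lt κ (show #(∅ : Finset ι) < j + 1 by simp)]
  | insert a s ha ih =>
    cases j with
    | zero => simp [card_insert_of_notMem ha]
    | succ j =>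
      have herase : ∀ i ∈ s, esymmOn ((insert a s).erase i) (j + 1) κ
          = esymmOn (s.erase i) (j + 1) κ + κ a * esymmOn (s.erase i) j κ := fun i hi => by
        rw [erase_insert_of_ne (ne_of_mem_of_not_mem hi ha).symm]
        exact esymmOn_insert κ (fun h => ha (mem_of_mem_erase h)) j
      rw [sum_insert ha, erase_insert ha, sum_congr rfl herase, sum_add_distrib, ← mul_sum,
        esymmOn_insert κ ha, card_insert_of_notMem ha]
      have ih₁ := ih (j + 1)
      push_cast at ih₁ ⊢
      linear_combination ih₁ + κ a * ih j

end CommRing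

lemma esymmOn_card_sub [Field R] {s : Finset ι} {κ : ι → R} (h0 : ∀ i ∈ s, κ i ≠ 0) {a : ℕ}
    (ha : a ≤ #s) : esymmOn s (#s - a) κ = (∏ i ∈ s, κ i) * esymmOn s a (fun i => (κ i)⁻¹) := by
  classical
  rw [esymmOn, esymmOn, mul_sum]
  refine sum_nbij' (s \ ·) (s \ ·) (fun t ht => ?_) (fun t ht => ?_) (fun t ht => ?_)
    (fun t ht => ?_) (fun t ht => ?_) <;> rw [mem_powersetCard] at ht
  · rw [mem_powersetCard, card_sdiff_of_subset ht.1, ht.2, Nat.sub_sub_self ha]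
    exact ⟨sdiff_subset, rfl⟩
  · rw [mem_powersetCard, card_sdiff_of_subset ht.1, ht.2]
    exact ⟨sdiff_subset, rfl⟩
  · exact Finset.sdiff_sdiff_eq_self ht.1
  · exact Finset.sdiff_sdiff_eq_self ht.1
  · have hne : ∏ i ∈ s \ t, κ i ≠ 0 := prod_ne_zero_iff.2 fun i hi => h0 i (mem_sdiff.1 hi).1
    rw [prod_inv_distrib, ← prod_sdiff ht.1, mul_comm (∏ i ∈ s \ t, κ i), mul_assoc,
      mul_inv_cancel₀ hne, mul_one]

lemma esymmOn_pos {s : Finset ι} {κ : ι → ℝ} (h : ∀ i ∈ s, 0 < κ i) {j : ℕ} (hj : j ≤ #s) :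
    0 < esymmOn s j κ :=
  sum_pos (fun _ ht => prod_pos fun i hi => h i ((mem_powersetCard.1 ht).1 hi))
    (powersetCard_nonempty.2 hj)

lemma esymmOn_succ_succ_nonpos_of_card_eq {s : Finset ι} {κ : ι → ℝ} {k : ℕ} (hs : #s = k + 2)
    (h₀ : 0 < esymmOn s k κ) (h₁ : esymmOn s (k + 1) κ = 0) : esymmOn s (k + 2) κ ≤ 0 := by
  by_contra! hpos
  rw [← hs, esymmOn_card] at hpos
  have hne : ∀ i ∈ s, κ i ≠ 0 := fun i hi h => hpos.ne' (prod_eq_zero hi h)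
  -- `σ_{k+1}` and `σ_k` are `∏ κ` times `σ_1` and `σ_2` of the reciprocals.
  have hσ₁ := esymmOn_card_sub hne (a := 1) (by omega)
  have hσ₂ := esymmOn_card_sub hne (a := 2) (by omega)
  rw [show #s - 1 = k + 1 by omega, h₁] at hσ₁
  rw [show #s - 2 = k by omega] at hσ₂
  have hσ₁' : esymmOn s 1 (fun i => (κ i)⁻¹) = 0 :=
    (mul_eq_zero.1 hσ₁.symm).resolve_left hpos.ne'
  have hσ₂' : 0 < esymmOn s 2 (fun i => (κ i)⁻¹) := pos_of_mul_pos_right (hσ₂ ▸ h₀) hpos.le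
  have hsq := esymmOn_one_sq (fun i => (κ i)⁻¹) s
  rw [hσ₁'] at hsq
  nlinarith [sum_nonneg fun i (_ : i ∈ s) => sq_nonneg (κ i)⁻¹]

lemma Multiset.esymm_succ_succ_nonpos_of_card_eq {W : Multiset ℝ} {k : ℕ}
    (hW : Multiset.card W = k + 2) (h₀ : 0 < W.esymm k) (h₁ : W.esymm (k + 1) = 0) :
    W.esymm (k + 2) ≤ 0 := by
  have hmap : (univ : Finset (Fin W.toList.length)).val.map W.toList.get = W := by
    rw [Fin.univ_val_map, List.ofFn_get, Multiset.coe_toList]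
  simp only [← hmap, ← esymmOn_eq_multiset_esymm] at h₀ h₁ ⊢
  exact esymmOn_succ_succ_nonpos_of_card_eq (by simpa using hW) h₀ h₁

namespace Polynomial

theorem Splits.derivative {f : ℝ[X]} (hf : f.Splits) : (derivative f).Splits := by
  have h₁ := card_roots_le_derivative f
  have h₂ := natDegree_derivative_le f
  rw [splits_iff_card_roots.1 hf] at h₁
  exact splits_iff_card_roots.2 (le_antisymm (card_roots' _) (by omega))

theorem Splits.iterate_derivative {f : ℝ[X]} (hf : f.Splits) (m : ℕ) :
    (Polynomial.derivative^[m] f).Splits := by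
  induction m with
  | zero => exact hf
  | succ m ih => rw [Function.iterate_succ_apply']; exact ih.derivative

end Polynomial

open Polynomial in
/-- Differentiating `∏ (X + κ i)` keeps it real-rooted (Rolle) and multiplies its top
coefficients by positive factors. -/
lemma exists_multiset_esymm_eq_pos_mul_esymmOn (s : Finset ι) (κ : ι → ℝ) {k : ℕ}
    (hk : k ≤ #s) : ∃ W : Multiset ℝ, Multiset.card W = k ∧
      ∃ c : ℕ → ℝ, ∀ j ≤ k, 0 < c j ∧ W.esymm j = c j * esymmOn s j κ := by
  classical
  set f : ℝ[X] := ∏ i ∈ s, (X + C (κ i))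
  have hfcoeff : ∀ j ≤ #s, f.coeff (#s - j) = esymmOn s j κ := fun j hj => by
    rw [Finset.prod_X_add_C_coeff s κ (Nat.sub_le _ j), Nat.sub_sub_self hj, esymmOn]
  set g := derivative^[#s - k] f
  have hgcoeff : ∀ j ≤ k, g.coeff (k - j) = ((#s - j).descFactorial (#s - k) : ℝ) * esymmOn s j κ :=
    fun j hj => by
      rw [coeff_iterate_derivative, show k - j + (#s - k) = #s - j by omega, hfcoeff j (by omega),
        nsmul_eq_mul]
  have hdesc : ∀ j ≤ k, (0 : ℝ) < (#s - j).descFactorial (#s - k) := fun j hj => by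
    exact_mod_cast Nat.descFactorial_pos.2 (by omega)
  have hfdeg : f.natDegree = #s := by
    simp [f, natDegree_prod_of_monic _ _ fun i _ => monic_X_add_C (κ i)]
  have hgk : g.coeff k = ((#s).descFactorial (#s - k) : ℝ) := by
    simpa using hgcoeff 0 (Nat.zero_le k)
  have hgdeg : g.natDegree = k := by
    refine le_antisymm ((natDegree_iterate_derivative f _).trans (by omega)) ?_
    exact le_natDegree_of_ne_zero (by simp [hgk])
  have hgroots : Multiset.card g.roots = k := by
    rw [splits_iff_card_roots.1 ((Splits.prod fun i _ =>
      Splits.of_natDegree_le_one (natDegree_X_add_C (κ i)).le).iterate_derivative _), hgdeg]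
  have hlead : 0 < g.leadingCoeff := by
    simp [leadingCoeff, hgdeg, hgk]
  refine ⟨g.roots.map Neg.neg, by rw [Multiset.card_map, hgroots],
    fun j => ((#s - j).descFactorial (#s - k) : ℝ) / g.leadingCoeff, fun j hj => ⟨?_, ?_⟩⟩
  · exact div_pos (hdesc j hj) hlead
  · have hvieta := coeff_eq_esymm_roots_of_card (hgroots.trans hgdeg.symm) (k := k - j) (by omega)
    rw [hgcoeff j hj, hgdeg, Nat.sub_sub_self hj] at hvieta
    rw [Multiset.esymm_neg, div_mul_eq_mul_div, hvieta, eq_div_iff hlead.ne']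
    ring

/-- The case `σ_{k+1} = 0` of Newton's inequality `σ_k σ_{k+2} ≤ c σ_{k+1}²`. -/
lemma esymmOn_succ_succ_nonpos (s : Finset ι) (κ : ι → ℝ) {k : ℕ} (h₀ : 0 < esymmOn s k κ)
    (h₁ : esymmOn s (k + 1) κ = 0) : esymmOn s (k + 2) κ ≤ 0 := by
  by_cases hk : k + 2 ≤ #s
  swap
  · exact (esymmOn_of_card_lt κ (by omega)).le
  obtain ⟨W, hW, c, hc⟩ := exists_multiset_esymm_eq_pos_mul_esymmOn s κ hk
  have hW₀ : 0 < W.esymm k := (hc k (by omega)).2 ▸ mul_pos (hc k (by omega)).1 h₀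
  have hW₁ : W.esymm (k + 1) = 0 := by rw [(hc (k + 1) (by omega)).2, h₁, mul_zero]
  have hW₂ := Multiset.esymm_succ_succ_nonpos_of_card_eq hW hW₀ hW₁
  rw [(hc (k + 2) le_rfl).2] at hW₂
  exact nonpos_of_mul_nonpos_right hW₂ (hc (k + 2) le_rfl).1

section Positivity

variable [DecidableEq ι] {κ : ι → ℝ}

lemma esymmOn_pos_of_insert {i : ι} {s : Finset ι} {j : ℕ} (hi : i ∉ s)
    (h₁ : 0 < esymmOn (insert i s) (j + 1) κ) (h₂ : 0 < esymmOn (insert i s) (j + 2) κ)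
    (hj : 0 ≤ esymmOn s j κ) (hj₁ : 0 ≤ esymmOn s (j + 1) κ) : 0 < esymmOn s (j + 1) κ := by
  refine hj₁.lt_of_ne fun h0 => ?_
  rw [esymmOn_insert κ hi, ← h0, zero_add] at h₁
  rw [esymmOn_insert κ hi (j + 1), ← h0, mul_zero, add_zero] at h₂
  have hpos : 0 < esymmOn s j κ := hj.lt_of_ne fun h => by rw [← h, mul_zero] at h₁; exact h₁.false
  exact (esymmOn_succ_succ_nonpos s κ hpos h0.symm).not_gt h₂

lemma esymmOn_pos_of_erase {s : Finset ι} {j : ℕ} (herase : ∀ i ∈ s, 0 ≤ esymmOn (s.erase i) j κ)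
    (hsucc : 0 < esymmOn s (j + 1) κ) (hj : 0 ≤ esymmOn s j κ) : 0 < esymmOn s j κ := by
  refine hj.lt_of_ne fun h0 => ?_
  have hzero : ∀ i ∈ s, esymmOn (s.erase i) j κ = 0 := by
    have hsum := sum_esymmOn_erase κ s j
    rw [← h0, mul_zero, mul_zero, add_zero] at hsum
    exact (sum_eq_zero_iff_of_nonneg herase).1 hsum
  have hconst : ∀ i ∈ s, esymmOn (s.erase i) (j + 1) κ = esymmOn s (j + 1) κ := fun i hi => by
    rw [esymmOn_succ_eq_erase κ hi, hzero i hi, mul_zero, add_zero]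
  have hsum := sum_esymmOn_erase κ s (j + 1)
  rw [sum_congr rfl hconst, sum_const, nsmul_eq_mul] at hsum
  push_cast at hsum
  nlinarith

theorem esymmOn_pos_of_nonneg [Fintype ι] {p : ℕ}
    (hnonneg : ∀ s j, j + #sᶜ ≤ p → 0 ≤ esymmOn s j κ) (hp : 0 < esymmOn univ p κ)
    (s : Finset ι) : ∀ j, j + #sᶜ ≤ p → 0 < esymmOn s j κ
  | 0, _ => by simp
  | j + 1, hs => by
    obtain hlt | heq := hs.lt_or_eq
    · refine esymmOn_pos_of_erase (fun i hi => hnonneg _ _ ?_)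
        (esymmOn_pos_of_nonneg hnonneg hp s (j + 2) (by omega)) (hnonneg s _ hs)
      rw [compl_erase, card_insert_of_notMem (notMem_compl.2 hi)]
      omega
    · rcases sᶜ.eq_empty_or_nonempty with hempty | ⟨i, hi⟩
      · rw [compl_eq_empty_iff] at hempty
        subst hempty
        simp only [compl_univ, card_empty, add_zero] at heq
        exact heq ▸ hp
      · have hcard : #(sᶜ.erase i) + 1 = #sᶜ := card_erase_add_one hi
        rw [mem_compl] at hi
        exact esymmOn_pos_of_insert hi
          (esymmOn_pos_of_nonneg hnonneg hp _ (j + 1) (by rw [compl_insert]; omega))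
          (esymmOn_pos_of_nonneg hnonneg hp _ (j + 2) (by rw [compl_insert]; omega))
          (hnonneg s j (by omega))
          (hnonneg s (j + 1) hs)
termination_by j => 2 * #sᶜ + (p - j)

end Positivity

end EsymmOn

theorem ConnectedSpace.forall_pos_of_nonneg_imp_pos {X ι : Type*} [TopologicalSpace X]
    [ConnectedSpace X] {S : Set ι} (hS : S.Finite) {f : ι → X → ℝ}
    (hf : ∀ c ∈ S, Continuous (f c)) (hpos : ∀ x, (∀ c ∈ S, 0 ≤ f c x) → ∀ c ∈ S, 0 < f c x)
    {x₀ : X} (hx₀ : ∀ c ∈ S, 0 < f c x₀) (x : X) : ∀ c ∈ S, 0 < f c x := by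
  have hclosed : IsClosed {x | ∀ c ∈ S, 0 < f c x} := by
    have : {x | ∀ c ∈ S, 0 < f c x} = ⋂ c ∈ S, {x | 0 ≤ f c x} := by
      ext x
      simpa only [Set.mem_iInter] using ⟨fun h c hc => (h c hc).le, hpos x⟩
    exact this ▸ isClosed_biInter fun c hc => isClosed_le continuous_const (hf c hc)
  have hopen : IsOpen {x | ∀ c ∈ S, 0 < f c x} := by
    simp only [Set.ofPred_forall]
    exact hS.isOpen_biInter fun c hc => isOpen_lt continuous_const (hf c hc)
  exact Set.eq_univ_iff_forall.1 (IsClopen.eq_univ ⟨hclosed, hopen⟩ ⟨x₀, hx₀⟩) x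

theorem stmt_11_general (n p : ℕ) (hp1 : 2 ≤ p) (hp2 : p ≤ n - 1)
    (X : Type*) [TopologicalSpace X] [ConnectedSpace X]
    (κ : X → Fin (n - 1) → ℝ) (hκ : Continuous κ)
    (hσp : ∀ x, 0 < esymm (n - 1) p (κ x))
    (x₀ : X) (hx₀ : ∀ i, 0 < κ x₀ i) :
    ∀ x, ∀ i : Fin (n - 1), 0 < esymmWithout (n - 1) (p - 2) i (κ x) := by
  intro x i
  rw [esymmWithout_eq_esymmOn]
  let S : Set (Finset (Fin (n - 1)) × ℕ) := {c | c.2 + #c.1ᶜ ≤ p}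
  have hS : S.Finite := (Set.finite_univ.prod (Set.finite_Iic p)).subset
    fun c hc => ⟨trivial, (Nat.le_add_right _ _).trans hc⟩
  refine ConnectedSpace.forall_pos_of_nonneg_imp_pos hS (fun c _ => hκ.esymmOn c.1 c.2)
    (fun x hx c hc => esymmOn_pos_of_nonneg (fun s j h => hx (s, j) h)
      (esymm_eq_esymmOn _ _ _ ▸ hσp x) c.1 c.2 hc)
    (fun c hc => esymmOn_pos (fun i _ => hx₀ i) ?_) x (univ.erase i, p - 2) ?_
  · have hcard := card_add_card_compl c.1
    have hc' : c.2 + #c.1ᶜ ≤ p := hc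
    rw [Fintype.card_fin] at hcard
    omega
  · show p - 2 + #(univ.erase i)ᶜ ≤ p
    rw [compl_erase, compl_univ, insert_empty, card_singleton]
    omega

/-- Positivity of `σ_{p-2;i}` along a connected space with an elliptic point,
used in the proof of the Minkowski-type inequality. -/
theorem stmt_11 (n p : ℕ) (hn : 3 ≤ n) (hp1 : 2 ≤ p) (hp2 : p ≤ n - 1)
    (X : Type*) [TopologicalSpace X] [ConnectedSpace X]
    (κ : X → Fin (n - 1) → ℝ) (hκ : Continuous κ)
    (hσp : ∀ x, 0 < esymm (n - 1) p (κ x))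
    (x₀ : X) (hx₀ : ∀ i, 0 < κ x₀ i) :
    ∀ x, ∀ i : Fin (n - 1), 0 < esymmWithout (n - 1) (p - 2) i (κ x) :=
  stmt_11_general n p hp1 hp2 X κ hκ hσp x₀ hx₀
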